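/- Let n = 2k ≥ 2 be even and let f be a local antimagic labeling of the triangular bracelet TB(n) such that f⁺(v) = 20k+12 for every degree-4 vertex v and f⁺(v) ∈ {9k+6, 21k+12} for every degree-3 vertex v, with exactly n+1 degree-3 vertices receiving each of these two values. For i = 1, 2, let U_i be the set of the n+1 degree-3 vertices with induced label 9k+6 (for i = 1) respectively 21k+12 (for i = 2). Suppose n+1 = r_i s_i with r_i, s_i ≥ 3 both odd, and let P_i be a partition of U_i into r_i blocks of size s_i such that no two vertices in the same block are adjacent or have a common neighbor. Then the graph TB^i(r_i, n) obtained from TB(n) by merging each block of P_i into a single vertex satisfies χ_la(TB^i(r_i, n)) = 3. -/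

import Mathlib

namespace LocalAntimagic

variable {V W : Type*}

/-- Induced vertex label: sum of edge labels over edges incident to `v`. -/
noncomputable def fplus (G : SimpleGraph V) (f : Sym2 V → ℕ) (v : V) : ℕ :=
  ∑ᶠ e ∈ G.incidenceSet v, f e

/-- `f` is a local antimagic labeling of `G`: a bijection from the edge set onto
`{1, …, q}` (`q` the number of edges) whose induced vertex labels distinguish
adjacent vertices. -/
def IsLocalAntimagic (G : SimpleGraph V) (f : Sym2 V → ℕ) : Prop :=
  Set.BijOn f G.edgeSet (Set.Icc 1 G.edgeSet.ncard) ∧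
  ∀ ⦃u w : V⦄, G.Adj u w → fplus G f u ≠ fplus G f w

/-- The local antimagic chromatic number: the least number of distinct induced
vertex labels over all local antimagic labelings. -/
noncomputable def chiLA (G : SimpleGraph V) : ℕ :=
  sInf {c : ℕ | ∃ f : Sym2 V → ℕ, IsLocalAntimagic G f ∧ (Set.range (fplus G f)).ncard = c}

/-- `n` disjoint copies of the path `P₃`; in copy `i`, vertex `(i,0) = uᵢ`,
`(i,1) = wᵢ`, `(i,2) = vᵢ`. -/
def nP3 (n : ℕ) : SimpleGraph (Fin n × Fin 3) :=
  SimpleGraph.fromRel (fun x y => x.1 = y.1 ∧ ((x.2 = 0 ∧ y.2 = 1) ∨ (x.2 = 1 ∧ y.2 = 2)))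

/-- Join of two graphs on disjoint vertex sets. -/
def joinG {α β : Type*} (G : SimpleGraph α) (H : SimpleGraph β) : SimpleGraph (α ⊕ β) :=
  SimpleGraph.fromRel (fun x y =>
    match x, y with
    | Sum.inl a, Sum.inl b => G.Adj a b
    | Sum.inr a, Sum.inr b => H.Adj a b
    | Sum.inl _, Sum.inr _ => True
    | Sum.inr _, Sum.inl _ => False)

/-- Disjoint union of two graphs. -/
def disjUnionG {α β : Type*} (G : SimpleGraph α) (H : SimpleGraph β) : SimpleGraph (α ⊕ β) :=
  SimpleGraph.fromRel (fun x y =>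
    match x, y with
    | Sum.inl a, Sum.inl b => G.Adj a b
    | Sum.inr a, Sum.inr b => H.Adj a b
    | _, _ => False)

/-- `m` disjoint copies of `G`. -/
def copies (m : ℕ) (G : SimpleGraph V) : SimpleGraph (Fin m × V) :=
  SimpleGraph.fromRel (fun x y => x.1 = y.1 ∧ G.Adj x.2 y.2)

/-- The fan blade graph `FB(n) = nP₃ ∨ O₁`. -/
def FB (n : ℕ) : SimpleGraph ((Fin n × Fin 3) ⊕ Fin 1) :=
  joinG (nP3 n) ⊥

/-- The graph obtained from `G` by merging vertices according to `p` (fibers of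
`p` are merged into single vertices). -/
def mergeMap (G : SimpleGraph V) (p : V → W) : SimpleGraph W :=
  SimpleGraph.fromRel (fun a b => ∃ x y, G.Adj x y ∧ p x = a ∧ p y = b)

/-- No two distinct vertices of `S` are adjacent or share a common neighbor. -/
def NoCommon (G : SimpleGraph V) (S : Set V) : Prop :=
  ∀ x ∈ S, ∀ y ∈ S, x ≠ y → ¬ G.Adj x y ∧ ∀ z, ¬ (G.Adj x z ∧ G.Adj y z)

/-- `P` is a partition of the set `S` into nonempty blocks. -/
def IsPartitionOn (S : Set V) (P : Set (Set V)) : Prop :=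
  (∀ B ∈ P, B ⊆ S) ∧ (∀ v ∈ S, ∃! B, B ∈ P ∧ v ∈ B) ∧ ∀ B ∈ P, B.Nonempty

/-- `p` identifies exactly the vertices lying in a common block of `P`,
and nothing else; `p` is surjective so the codomain is exactly the merged
vertex set. -/
def IsMergeOf (P : Set (Set V)) (p : V → W) : Prop :=
  Function.Surjective p ∧ ∀ x y : V, p x = p y ↔ (x = y ∨ ∃ B ∈ P, x ∈ B ∧ y ∈ B)


/-- The diamond fan `DF(2s)`: two copies (`c = 0,1`) of `sP₃`, plus two hub
vertices `y = Sum.inr 0` and `z = Sum.inr 1`; in copy `c`, blade `j`, position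
`0,2` are the degree-1 endpoints and `1` the middle vertex of the path. -/
def DF2 (s : ℕ) : SimpleGraph ((Fin 2 × Fin s × Fin 3) ⊕ Fin 2) :=
  SimpleGraph.fromRel (fun x y =>
    match x, y with
    | Sum.inl a, Sum.inl b =>
        a.1 = b.1 ∧ a.2.1 = b.2.1 ∧ ((a.2.2 = 0 ∧ b.2.2 = 1) ∨ (a.2.2 = 1 ∧ b.2.2 = 2))
    | Sum.inl a, Sum.inr j =>
        (j = 0 ∧ ((a.1 = 0 ∧ a.2.2 ≠ 1) ∨ (a.1 = 1 ∧ a.2.2 = 1))) ∨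
        (j = 1 ∧ ((a.1 = 1 ∧ a.2.2 ≠ 1) ∨ (a.1 = 0 ∧ a.2.2 = 1)))
    | _, _ => False)

abbrev DFVert (r s : ℕ) :=
  (Fin r × ((Fin 2 × Fin s × Fin 3) ⊕ Fin 2)) ⊕ ((Fin s × Fin 3) ⊕ Fin 1)

/-- Peanut graph `Pt(n)`: `Sum.inl (i, 0) = u_{i+1}`, `Sum.inl (i, 1) = v_{i+1}`
for `0 ≤ i ≤ 2n`, and `Sum.inr 0 = x`, `Sum.inr 1 = y`. -/
abbrev PtVert (n : ℕ) := (Fin (2*n+1) × Fin 2) ⊕ Fin 2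

def Pt (n : ℕ) : SimpleGraph (PtVert n) :=
  SimpleGraph.fromRel (fun a b =>
    match a, b with
    | Sum.inl p, Sum.inl q =>
        (p.2 = q.2 ∧ (p.1 : ℕ) + 1 = (q.1 : ℕ)) ∨
        (p.1 = q.1 ∧ (p.1 : ℕ) % 2 = 0 ∧ p.2 = 0 ∧ q.2 = 1)
    | Sum.inr j, Sum.inl p => (j = 0 ∧ (p.1 : ℕ) = 0) ∨ (j = 1 ∧ (p.1 : ℕ) = 2*n)
    | _, _ => False)

/-- Triangular bracelet `TB(n)`: `Sum.inl (j, 0) = u_{2j+1}`,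
`Sum.inl (j, 1) = v_{2j+1}` for `0 ≤ j ≤ n`, and `Sum.inr j = z_{2j}`. -/
abbrev TBVert (n : ℕ) := (Fin (n+1) × Fin 2) ⊕ Fin (n+1)

def TB (n : ℕ) : SimpleGraph (TBVert n) :=
  SimpleGraph.fromRel (fun a b =>
    match a, b with
    | Sum.inl p, Sum.inl q => p.1 = q.1 ∧ p.2 = 0 ∧ q.2 = 1
    | Sum.inr j, Sum.inl p =>
        (p.1 : ℕ) = (j : ℕ) ∨ (p.1 : ℕ) + 1 = (j : ℕ) ∨ ((j : ℕ) = 0 ∧ (p.1 : ℕ) = n)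
    | _, _ => False)

/-- Disjoint union of an indexed family of graphs. -/
def sigmaG {ι : Type*} {Vf : ι → Type*} (G : ∀ a, SimpleGraph (Vf a)) :
    SimpleGraph (Σ a, Vf a) :=
  SimpleGraph.fromRel (fun x y =>
    ∃ h : x.1 = y.1, (G y.1).Adj (cast (congrArg Vf h) x.2) y.2)

/-- `FB¹(r,s)`: `Sum.inl (i,j) = w_{i,j}`, `Sum.inr (Sum.inl i) = xᵢ`,
`Sum.inr (Sum.inr (j,0)) = uⱼ`, `Sum.inr (Sum.inr (j,1)) = vⱼ`. -/
def FB1 (r s : ℕ) : SimpleGraph ((Fin r × Fin s) ⊕ (Fin r ⊕ (Fin s × Fin 2))) :=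
  SimpleGraph.fromRel (fun a b =>
    match a, b with
    | Sum.inl w, Sum.inr (Sum.inl x) => w.1 = x
    | Sum.inl w, Sum.inr (Sum.inr uv) => w.2 = uv.1
    | Sum.inr (Sum.inl _), Sum.inr (Sum.inr _) => True
    | _, _ => False)

/-- `FB²(r,s)`: `Sum.inl (i,j,0) = u_{i,j}`, `Sum.inl (i,j,1) = v_{i,j}`,
`Sum.inr (Sum.inl i) = xᵢ`, `Sum.inr (Sum.inr j) = wⱼ`. -/
def FB2 (r s : ℕ) : SimpleGraph ((Fin r × Fin s × Fin 2) ⊕ (Fin r ⊕ Fin s)) :=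
  SimpleGraph.fromRel (fun a b =>
    match a, b with
    | Sum.inl uv, Sum.inr (Sum.inl x) => uv.1 = x
    | Sum.inl uv, Sum.inr (Sum.inr w) => uv.2.1 = w
    | Sum.inr (Sum.inl _), Sum.inr (Sum.inr _) => True
    | _, _ => False)


/-- The degree-3 vertices of `TB(n)`: the vertices `u_{2j-1}, v_{2j-1}`. -/
def TBdeg3 (n : ℕ) : Set (TBVert n) :=
  {v | ∃ q, v = Sum.inl q}

/-- The degree-4 vertices of `TB(n)`: the vertices `z_0, z_2, …, z_{2n}`. -/
def TBdeg4 (n : ℕ) : Set (TBVert n) :=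
  {v | ∃ j, v = Sum.inr j}

/-!
Give each edge of the merged graph the label of the unique edge of `TB(n)` it comes from; since
the blocks have no inner edges and no common neighbours, and the merged set is independent, the
merge creates neither loops nor multiple edges, so this is again a bijection onto `1, …, q`.
Unmerged vertices keep their labels, namely `20k + 12` or the degree-3 label other than `t`,
while a block of `s ≥ 3` vertices of label `t` gets `s t ≥ 3t`, which exceeds both. Hence the new
labeling is local antimagic with at most three labels. Conversely the triangle `u₁ v₁ z₀`
survives the merge, so no local antimagic labeling of the merged graph uses fewer than three.
-/

section Merge

variable {G : SimpleGraph V} {S : Set V} {P : Set (Set V)} {p : V → W}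

lemma eq_of_merge_eq_of_notMem (hpart : IsPartitionOn S P) (hp : IsMergeOf P p)
    {u v : V} (hv : v ∉ S) (h : p u = p v) : u = v := by
  rcases (hp.2 u v).1 h with huv | ⟨B, hB, -, hvB⟩
  · exact huv
  · exact absurd (hpart.1 B hB hvB) hv

lemma merge_eq_iff_mem (hpart : IsPartitionOn S P) (hp : IsMergeOf P p)
    {B : Set V} (hB : B ∈ P) {v : V} (hv : v ∈ B) (u : V) : p u = p v ↔ u ∈ B := by
  refine ⟨fun h => ?_, fun hu => (hp.2 u v).2 (Or.inr ⟨B, hB, hu, hv⟩)⟩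
  rcases (hp.2 u v).1 h with rfl | ⟨B', hB', huB', hvB'⟩
  · exact hv
  · obtain ⟨B₀, -, huniq⟩ := hpart.2.1 v (hpart.1 B hB hv)
    rwa [huniq B' ⟨hB', hvB'⟩, ← huniq B ⟨hB, hv⟩] at huB'

lemma not_adj_of_merge_eq (hnc : ∀ B ∈ P, NoCommon G B) (hp : IsMergeOf P p)
    {x y : V} (h : p x = p y) : ¬ G.Adj x y := by
  intro hxy
  rcases (hp.2 x y).1 h with rfl | ⟨B, hB, hxB, hyB⟩
  · exact G.irrefl hxy
  · exact (hnc B hB x hxB y hyB hxy.ne).1 hxy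

lemma mergeMap_adj {a b : W} :
    (mergeMap G p).Adj a b ↔ a ≠ b ∧ ∃ x y, G.Adj x y ∧ p x = a ∧ p y = b := by
  refine ⟨?_, fun ⟨hne, h⟩ => ⟨hne, Or.inl h⟩⟩
  rintro ⟨hne, h | ⟨x, y, hxy, hx, hy⟩⟩
  · exact ⟨hne, h⟩
  · exact ⟨hne, y, x, hxy.symm, hy, hx⟩

lemma mergeMap_adj_of_adj (hnc : ∀ B ∈ P, NoCommon G B) (hp : IsMergeOf P p)
    {x y : V} (hxy : G.Adj x y) : (mergeMap G p).Adj (p x) (p y) :=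
  mergeMap_adj.2 ⟨fun h => not_adj_of_merge_eq hnc hp h hxy, x, y, hxy, rfl, rfl⟩

lemma isNClique_image_mergeMap [DecidableEq W] (hnc : ∀ B ∈ P, NoCommon G B)
    (hp : IsMergeOf P p) {m : ℕ} {s : Finset V} (hs : G.IsNClique m s) :
    (mergeMap G p).IsNClique m (s.image p) := by
  have hinj : Set.InjOn p s := fun x hx y hy h => by
    by_contra hxy
    exact not_adj_of_merge_eq hnc hp h (hs.1 hx hy hxy)
  refine ⟨?_, by rw [Finset.card_image_of_injOn hinj, hs.2]⟩
  rw [Finset.coe_image]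
  rintro _ ⟨x, hx, rfl⟩ _ ⟨y, hy, rfl⟩ hne
  exact mergeMap_adj_of_adj hnc hp (hs.1 hx hy fun h => hne (congrArg p h))

lemma mergeMap_edgeSet (hnc : ∀ B ∈ P, NoCommon G B) (hp : IsMergeOf P p) :
    (mergeMap G p).edgeSet = Sym2.map p '' G.edgeSet := by
  ext e
  induction e using Sym2.ind with
  | _ a b =>
  rw [SimpleGraph.mem_edgeSet]
  constructor
  · rintro h
    obtain ⟨-, x, y, hxy, rfl, rfl⟩ := mergeMap_adj.1 h
    exact ⟨s(x, y), hxy, rfl⟩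
  · rintro ⟨e, he, hmap⟩
    induction e using Sym2.ind with
    | _ x y =>
    rw [Sym2.map_mk, Sym2.eq_iff] at hmap
    rcases hmap with ⟨rfl, rfl⟩ | ⟨rfl, rfl⟩
    · exact mergeMap_adj_of_adj hnc hp he
    · exact (mergeMap_adj_of_adj hnc hp he).symm

/-- Two edges with the same image would have merged endpoints at both ends; a common
neighbour of two vertices of a block is excluded by `NoCommon`, an edge between two blocks by
the independence of `S`. -/
lemma eq_and_eq_of_merge_eq (hS : G.IsIndepSet S) (hpart : IsPartitionOn S P)
    (hnc : ∀ B ∈ P, NoCommon G B) (hp : IsMergeOf P p)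
    {x y x' y' : V} (hxy : G.Adj x y) (hxy' : G.Adj x' y')
    (hx : p x = p x') (hy : p y = p y') : x = x' ∧ y = y' := by
  rcases (hp.2 x x').1 hx with rfl | ⟨B, hB, hxB, hx'B⟩
  · rcases (hp.2 y y').1 hy with rfl | ⟨B, hB, hyB, hy'B⟩
    · exact ⟨rfl, rfl⟩
    · by_contra hne
      exact (hnc B hB y hyB y' hy'B (by simpa using hne)).2 x ⟨hxy.symm, hxy'.symm⟩
  · rcases (hp.2 y y').1 hy with rfl | ⟨B', hB', hyB', -⟩
    · by_contra hne
      exact (hnc B hB x hxB x' hx'B (by simpa using hne)).2 y ⟨hxy, hxy'⟩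
    · exact (hS (hpart.1 B hB hxB) (hpart.1 B' hB' hyB') hxy.ne hxy).elim

lemma injOn_sym2Map_edgeSet (hS : G.IsIndepSet S) (hpart : IsPartitionOn S P)
    (hnc : ∀ B ∈ P, NoCommon G B) (hp : IsMergeOf P p) :
    Set.InjOn (Sym2.map p) G.edgeSet := by
  intro e he e' he' hmap
  induction e using Sym2.ind with
  | _ x y =>
  induction e' using Sym2.ind with
  | _ x' y' =>
  rw [SimpleGraph.mem_edgeSet] at he he'
  rw [Sym2.map_mk, Sym2.map_mk, Sym2.eq_iff] at hmap
  rcases hmap with ⟨hx, hy⟩ | ⟨hx, hy⟩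
  · obtain ⟨rfl, rfl⟩ := eq_and_eq_of_merge_eq hS hpart hnc hp he he' hx hy
    rfl
  · obtain ⟨rfl, rfl⟩ := eq_and_eq_of_merge_eq hS hpart hnc hp he he'.symm hx hy
    exact Sym2.eq_swap

end Merge

section PushLabel

open Classical in
/-- Each merged edge gets the label of some edge of `G` mapped onto it (unique once `Sym2.map p`
is injective on edges); all other pairs get `0`. -/
noncomputable def pushLabel (G : SimpleGraph V) (f : Sym2 V → ℕ) (p : V → W) : Sym2 W → ℕ :=
  fun e => if h : ∃ e' ∈ G.edgeSet, Sym2.map p e' = e then f h.choose else 0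

variable {G : SimpleGraph V} {f : Sym2 V → ℕ} {S : Set V} {P : Set (Set V)} {p : V → W}

lemma pushLabel_sym2Map (hinj : Set.InjOn (Sym2.map p) G.edgeSet) {e : Sym2 V}
    (he : e ∈ G.edgeSet) : pushLabel G f p (Sym2.map p e) = f e := by
  have h : ∃ e' ∈ G.edgeSet, Sym2.map p e' = Sym2.map p e := ⟨e, he, rfl⟩
  rw [pushLabel, dif_pos h, hinj h.choose_spec.1 he h.choose_spec.2]

lemma bijOn_pushLabel (hS : G.IsIndepSet S) (hpart : IsPartitionOn S P)
    (hnc : ∀ B ∈ P, NoCommon G B) (hp : IsMergeOf P p)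
    (hf : Set.BijOn f G.edgeSet (Set.Icc 1 G.edgeSet.ncard)) :
    Set.BijOn (pushLabel G f p) (mergeMap G p).edgeSet
      (Set.Icc 1 (mergeMap G p).edgeSet.ncard) := by
  have hinj := injOn_sym2Map_edgeSet hS hpart hnc hp
  rw [mergeMap_edgeSet hnc hp, hinj.ncard_image]
  refine ⟨?_, ?_, ?_⟩
  · rintro _ ⟨e, he, rfl⟩
    rw [pushLabel_sym2Map hinj he]
    exact hf.mapsTo he
  · rintro _ ⟨e, he, rfl⟩ _ ⟨e', he', rfl⟩ h
    rw [pushLabel_sym2Map hinj he, pushLabel_sym2Map hinj he'] at h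
    rw [hf.injOn he he' h]
  · intro l hl
    obtain ⟨e, he, rfl⟩ := hf.surjOn hl
    exact ⟨Sym2.map p e, ⟨e, he, rfl⟩, pushLabel_sym2Map hinj he⟩

lemma fplus_pushLabel [Finite V] (hS : G.IsIndepSet S) (hpart : IsPartitionOn S P)
    (hnc : ∀ B ∈ P, NoCommon G B) (hp : IsMergeOf P p) (v : V) :
    fplus (mergeMap G p) (pushLabel G f p) (p v) = ∑ᶠ u ∈ p ⁻¹' {p v}, fplus G f u := by
  have hinj := injOn_sym2Map_edgeSet hS hpart hnc hp
  have hinc : (mergeMap G p).incidenceSet (p v) =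
      Sym2.map p '' ⋃ u ∈ p ⁻¹' {p v}, G.incidenceSet u := by
    ext e
    simp only [SimpleGraph.incidenceSet, mergeMap_edgeSet hnc hp, Set.mem_image, Set.mem_iUnion, Set.mem_preimage, Set.mem_singleton_iff]
    constructor
    · rintro ⟨⟨e, he, rfl⟩, hv⟩
      obtain ⟨u, hu, hpu⟩ := Sym2.mem_map.1 hv
      exact ⟨e, ⟨u, hpu, he, hu⟩, rfl⟩
    · rintro ⟨e, ⟨u, hpu, he, hu⟩, rfl⟩
      exact ⟨⟨e, he, rfl⟩, Sym2.mem_map.2 ⟨u, hu, hpu⟩⟩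
  have hdisj : (p ⁻¹' {p v}).PairwiseDisjoint G.incidenceSet := by
    intro u hu u' hu' hne
    refine Set.disjoint_left.2 fun e ⟨he, hue⟩ ⟨_, hu'e⟩ => ?_
    rw [(Sym2.mem_and_mem_iff hne).1 ⟨hue, hu'e⟩, SimpleGraph.mem_edgeSet] at he
    exact not_adj_of_merge_eq hnc hp (hu.trans hu'.symm) he
  rw [fplus, hinc, finsum_mem_image (hinj.mono fun e he => ?_),
    finsum_mem_biUnion hdisj (Set.toFinite _) fun u _ => Set.toFinite _]
  · exact finsum_congr fun u => finsum_congr fun _ =>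
      finsum_mem_congr rfl fun e he => pushLabel_sym2Map hinj he.1
  · obtain ⟨u, -, hu⟩ := Set.mem_iUnion₂.1 he
    exact hu.1

lemma fplus_pushLabel_of_notMem [Finite V] (hS : G.IsIndepSet S) (hpart : IsPartitionOn S P)
    (hnc : ∀ B ∈ P, NoCommon G B) (hp : IsMergeOf P p) {v : V} (hv : v ∉ S) :
    fplus (mergeMap G p) (pushLabel G f p) (p v) = fplus G f v := by
  have hfiber : p ⁻¹' {p v} = {v} :=
    Set.ext fun u => ⟨eq_of_merge_eq_of_notMem hpart hp hv, fun hu => congrArg p hu⟩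
  rw [fplus_pushLabel hS hpart hnc hp, hfiber, finsum_mem_singleton]

lemma finsum_mem_const {M : Type*} [AddCommMonoid M] {B : Set V} (hB : B.Finite) (c : M) :
    ∑ᶠ _ ∈ B, c = B.ncard • c := by
  rw [← hB.coe_toFinset, finsum_mem_coe_finset, Finset.sum_const, Set.ncard_coe_finset]

lemma fplus_pushLabel_of_mem [Finite V] (hS : G.IsIndepSet S) (hpart : IsPartitionOn S P)
    (hnc : ∀ B ∈ P, NoCommon G B) (hp : IsMergeOf P p) {t s : ℕ}
    (hSt : ∀ v ∈ S, fplus G f v = t) (hBcard : ∀ B ∈ P, B.ncard = s) {v : V} (hv : v ∈ S) :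
    fplus (mergeMap G p) (pushLabel G f p) (p v) = s * t := by
  obtain ⟨B, ⟨hB, hvB⟩, -⟩ := hpart.2.1 v hv
  have hfiber : p ⁻¹' {p v} = B := Set.ext (merge_eq_iff_mem hpart hp hB hvB)
  rw [fplus_pushLabel hS hpart hnc hp, hfiber,
    finsum_mem_congr rfl fun u hu => hSt u (hpart.1 B hB hu),
    finsum_mem_const (Set.toFinite B), hBcard B hB, smul_eq_mul]

lemma isLocalAntimagic_pushLabel [Finite V] (hf : IsLocalAntimagic G f)
    (hS : G.IsIndepSet S) (hpart : IsPartitionOn S P) (hnc : ∀ B ∈ P, NoCommon G B)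
    (hp : IsMergeOf P p) {t s : ℕ} (hSt : ∀ v ∈ S, fplus G f v = t)
    (hBcard : ∀ B ∈ P, B.ncard = s) (hnbr : ∀ x ∈ S, ∀ y, G.Adj x y → fplus G f y ≠ s * t) :
    IsLocalAntimagic (mergeMap G p) (pushLabel G f p) := by
  refine ⟨bijOn_pushLabel hS hpart hnc hp hf.1, fun a b hab => ?_⟩
  obtain ⟨-, x, y, hxy, rfl, rfl⟩ := mergeMap_adj.1 hab
  have hlabel {v} (hv : v ∈ S) := fplus_pushLabel_of_mem (f := f) hS hpart hnc hp hSt hBcard hv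
  have hlabel' {v} (hv : v ∉ S) := fplus_pushLabel_of_notMem (f := f) hS hpart hnc hp hv
  by_cases hx : x ∈ S <;> by_cases hy : y ∈ S
  · exact absurd hxy (hS hx hy hxy.ne)
  · rw [hlabel hx, hlabel' hy]
    exact (hnbr x hx y hxy).symm
  · rw [hlabel' hx, hlabel hy]
    exact hnbr y hy x hxy.symm
  · rw [hlabel' hx, hlabel' hy]
    exact hf.2 hxy

lemma range_fplus_pushLabel_subset [Finite V] (hS : G.IsIndepSet S)
    (hpart : IsPartitionOn S P) (hnc : ∀ B ∈ P, NoCommon G B) (hp : IsMergeOf P p) {t s : ℕ}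
    (hSt : ∀ v ∈ S, fplus G f v = t) (hBcard : ∀ B ∈ P, B.ncard = s) :
    Set.range (fplus (mergeMap G p) (pushLabel G f p)) ⊆ insert (s * t) (fplus G f '' Sᶜ) := by
  rintro _ ⟨a, rfl⟩
  obtain ⟨v, rfl⟩ := hp.1 a
  by_cases hv : v ∈ S
  · exact Or.inl (fplus_pushLabel_of_mem hS hpart hnc hp hSt hBcard hv)
  · exact Or.inr ⟨v, hv, (fplus_pushLabel_of_notMem hS hpart hnc hp hv).symm⟩

end PushLabel

section ChromaticNumber

variable {G : SimpleGraph V} {f : Sym2 V → ℕ}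

lemma isIndepSet_of_fplus_eq (hf : IsLocalAntimagic G f) {S : Set V} {t : ℕ}
    (hSt : ∀ v ∈ S, fplus G f v = t) : G.IsIndepSet S :=
  fun _ hx _ hy _ hxy => hf.2 hxy ((hSt _ hx).trans (hSt _ hy).symm)

lemma chiLA_le (hf : IsLocalAntimagic G f) : chiLA G ≤ (Set.range (fplus G f)).ncard :=
  Nat.sInf_le ⟨f, hf, rfl⟩

lemma card_le_ncard_range_fplus [Finite V] (hf : IsLocalAntimagic G f) {m : ℕ}
    {s : Finset V} (hs : G.IsNClique m s) : m ≤ (Set.range (fplus G f)).ncard := by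
  classical
  have hinj : Set.InjOn (fplus G f) s := fun x hx y hy h => by
    by_contra hxy
    exact hf.2 (hs.1 hx hy hxy) h
  calc m = (s.image (fplus G f)).card := by rw [Finset.card_image_of_injOn hinj, hs.2]
    _ = (↑(s.image (fplus G f)) : Set ℕ).ncard := (Set.ncard_coe_finset _).symm
    _ ≤ (Set.range (fplus G f)).ncard :=
      Set.ncard_le_ncard (by simp) (Set.finite_range _)

lemma le_chiLA_of_isNClique [Finite V] (hG : ∃ f, IsLocalAntimagic G f) {m : ℕ}
    {s : Finset V} (hs : G.IsNClique m s) : m ≤ chiLA G := by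
  obtain ⟨f, hf⟩ := hG
  refine le_csInf ⟨_, f, hf, rfl⟩ ?_
  rintro _ ⟨g, hg, rfl⟩
  exact card_le_ncard_range_fplus hg hs

end ChromaticNumber

lemma TB.isNClique_three {n : ℕ} (j : Fin (n + 1)) :
    (TB n).IsNClique 3 {Sum.inl (j, 0), Sum.inl (j, 1), Sum.inr j} := by
  refine SimpleGraph.is3Clique_triple_iff.2 ⟨?_, ?_, ?_⟩ <;>
    simp [TB, SimpleGraph.fromRel_adj]

theorem chiLA_TB_merge_deg3_general (n k : ℕ)
    (f : Sym2 (TBVert n) → ℕ) (hf : IsLocalAntimagic (TB n) f)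
    (hdeg4 : ∀ v ∈ TBdeg4 n, fplus (TB n) f v = 20 * k + 12)
    (hdeg3 : ∀ v ∈ TBdeg3 n,
      fplus (TB n) f v = 9 * k + 6 ∨ fplus (TB n) f v = 21 * k + 12)
    (t : ℕ) (ht : t = 9 * k + 6 ∨ t = 21 * k + 12)
    (s : ℕ) (hs : 3 ≤ s)
    (P : Set (Set (TBVert n)))
    (hpart : IsPartitionOn {v ∈ TBdeg3 n | fplus (TB n) f v = t} P)
    (hBcard : ∀ B ∈ P, B.ncard = s)
    (hnc : ∀ B ∈ P, NoCommon (TB n) B)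
    (W : Type*) (p : TBVert n → W) (hp : IsMergeOf P p) :
    chiLA (mergeMap (TB n) p) = 3 := by
  classical
  set S := {v ∈ TBdeg3 n | fplus (TB n) f v = t}
  have hSt : ∀ v ∈ S, fplus (TB n) f v = t := fun _ hv => hv.2
  have hS := isIndepSet_of_fplus_eq hf hSt
  -- `30k + 18 - t` is the degree-3 label other than `t`
  have hout : fplus (TB n) f '' Sᶜ ⊆ {20 * k + 12, 30 * k + 18 - t} := by
    rintro _ ⟨v | j, hv, rfl⟩
    · have hvt : fplus (TB n) f (Sum.inl v) ≠ t := fun h => hv ⟨⟨v, rfl⟩, h⟩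
      rcases hdeg3 _ ⟨v, rfl⟩ with h | h <;> simp only [Set.mem_insert_iff,
        Set.mem_singleton_iff] <;> omega
    · exact Or.inl (hdeg4 _ ⟨j, rfl⟩)
  have hnbr : ∀ x ∈ S, ∀ y, (TB n).Adj x y → fplus (TB n) f y ≠ s * t := by
    intro x hx y hxy
    have hy := hout ⟨y, fun hy => hS hx hy hxy.ne hxy, rfl⟩
    have hst : 3 * t ≤ s * t := Nat.mul_le_mul_right t hs
    simp only [Set.mem_insert_iff, Set.mem_singleton_iff] at hy
    omega
  have hg := isLocalAntimagic_pushLabel hf hS hpart hnc hp hSt hBcard hnbr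
  have : Finite W := Finite.of_surjective p hp.1
  refine le_antisymm ((chiLA_le hg).trans ?_)
    (le_chiLA_of_isNClique ⟨_, hg⟩ (isNClique_image_mergeMap hnc hp (TB.isNClique_three 0)))
  calc (Set.range (fplus (mergeMap (TB n) p) (pushLabel (TB n) f p))).ncard
      ≤ ({s * t, 20 * k + 12, 30 * k + 18 - t} : Set ℕ).ncard :=
        Set.ncard_le_ncard ((range_fplus_pushLabel_subset hS hpart hnc hp hSt hBcard).trans
          (Set.insert_subset_insert hout)) (Set.toFinite _)
    _ ≤ 3 := by
        rw [← Finset.coe_pair, ← Finset.coe_insert, Set.ncard_coe_finset]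
        exact Finset.card_le_three

/-- `TB^i(r_i, n)`: given a local antimagic labeling of `TB(n)` (with `n = 2k`
even) whose induced labels are `20k+12` on all degree-4 vertices and
`9k+6` or `21k+12` on the degree-3 vertices, with exactly `n+1` degree-3
vertices of each label, merging the degree-3 vertices of one of these two
labels `t` along a partition into `r` blocks of size `s` (with `r, s ≥ 3` both
odd, `rs = n+1`, blocks independent without common neighbors) gives a graph
with `χ_{la} = 3`. -/
theorem chiLA_TB_merge_deg3 (n k : ℕ) (hn : n = 2 * k) (hk : 1 ≤ k)
    (f : Sym2 (TBVert n) → ℕ) (hf : IsLocalAntimagic (TB n) f)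
    (hdeg4 : ∀ v ∈ TBdeg4 n, fplus (TB n) f v = 20 * k + 12)
    (hdeg3 : ∀ v ∈ TBdeg3 n,
      fplus (TB n) f v = 9 * k + 6 ∨ fplus (TB n) f v = 21 * k + 12)
    (hcount1 : {v ∈ TBdeg3 n | fplus (TB n) f v = 9 * k + 6}.ncard = n + 1)
    (hcount2 : {v ∈ TBdeg3 n | fplus (TB n) f v = 21 * k + 12}.ncard = n + 1)
    (t : ℕ) (ht : t = 9 * k + 6 ∨ t = 21 * k + 12)
    (r s : ℕ) (hrodd : Odd r) (hsodd : Odd s) (hr : 3 ≤ r) (hs : 3 ≤ s)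
    (hrs : r * s = n + 1)
    (P : Set (Set (TBVert n)))
    (hpart : IsPartitionOn {v ∈ TBdeg3 n | fplus (TB n) f v = t} P)
    (hPcard : P.ncard = r) (hBcard : ∀ B ∈ P, B.ncard = s)
    (hnc : ∀ B ∈ P, NoCommon (TB n) B)
    (W : Type*) (p : TBVert n → W) (hp : IsMergeOf P p) :
    chiLA (mergeMap (TB n) p) = 3 :=
  chiLA_TB_merge_deg3_general n k f hf hdeg4 hdeg3 t ht s hs P hpart hBcard hnc W p hp

end LocalAntimagic
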